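/- arXiv:2501.17708 — 6 statements merged into one kernel-verified Lean document; each statement's English description precedes it below -/
import Mathlib

section
/- In a metric space, let C be a nonempty bounded set and let N be a finite family of at least 5 nonempty bounded sets, each C' ∈ N satisfying d(C, C') ≤ diam(C) and diam(C') ≥ diam(C). Let r₁, r₂ be the two largest diameters among sets in N. Then diam(C ∪ ⋃_{C' ∈ N} C') ≤ r₁ + r₂ + 3·diam(C), while diam(C) + ∑_{C' ∈ N} diam(C') > r₁ + r₂ + 3·diam(C). Hence merging C with all sets of N strictly decreases the sum of diameters. -/
theorem stmt2 {X : Type*} [MetricSpace X] (C : Set X) (N : Finset (Set X))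
    (hC : C.Nonempty) (hCb : Bornology.IsBounded C) (hCd : 0 < Metric.diam C)
    (hcard : 4 < N.card)
    (hne : ∀ C' ∈ N, Set.Nonempty C') (hb : ∀ C' ∈ N, Bornology.IsBounded C')
    (hdist : ∀ C' ∈ N, sInf (Set.image2 dist C C') ≤ Metric.diam C)
    (hdiam : ∀ C' ∈ N, Metric.diam C ≤ Metric.diam C')
    (D₁ D₂ : Set X) (hD₁ : D₁ ∈ N) (hD₂ : D₂ ∈ N) (hD : D₁ ≠ D₂)
    (hmax : ∀ C' ∈ N, C' ≠ D₁ → C' ≠ D₂ →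
      Metric.diam C' ≤ min (Metric.diam D₁) (Metric.diam D₂)) :
    Metric.diam (C ∪ ⋃ C' ∈ N, C') ≤
        Metric.diam D₁ + Metric.diam D₂ + 3 * Metric.diam C ∧
      Metric.diam D₁ + Metric.diam D₂ + 3 * Metric.diam C <
        Metric.diam C + ∑ C' ∈ N, Metric.diam C' := by
  classical
  set a := Metric.diam C with ha
  set d₁ := Metric.diam D₁ with hd1
  set d₂ := Metric.diam D₂ with hd2
  have ha0 : (0:ℝ) ≤ a := Metric.diam_nonneg
  have hd10 : a ≤ d₁ := hdiam D₁ hD₁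
  have hd20 : a ≤ d₂ := hdiam D₂ hD₂
  -- key: points in C' are close to C
  have key : ∀ C' ∈ N, ∀ x ∈ C', ∀ ε > (0:ℝ),
      ∃ p ∈ C, dist x p ≤ Metric.diam C' + a + ε := by
    intro C' hC' x hx ε hε
    have hSne : (Set.image2 dist C C').Nonempty := Set.Nonempty.image2 hC (hne C' hC')
    have hSbd : BddBelow (Set.image2 dist C C') := by
      refine ⟨0, ?_⟩
      rintro r ⟨p, hp, q, hq, rfl⟩
      exact dist_nonneg
    have hlt : sInf (Set.image2 dist C C') < a + ε :=
      lt_of_le_of_lt (hdist C' hC') (by linarith)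
    obtain ⟨r, hr, hrlt⟩ := (csInf_lt_iff hSbd hSne).mp hlt
    obtain ⟨p, hp, q, hq, rfl⟩ := hr
    refine ⟨p, hp, ?_⟩
    have h1 : dist x p ≤ dist x q + dist q p := dist_triangle x q p
    have h2 : dist x q ≤ Metric.diam C' := Metric.dist_le_diam_of_mem (hb C' hC') hx hq
    have h3 : dist q p = dist p q := dist_comm q p
    linarith
  -- pair bound for distinct sets
  have pair : ∀ A ∈ N, ∀ B ∈ N, A ≠ B →
      Metric.diam A + Metric.diam B ≤ d₁ + d₂ := by
    intro A hA B hB hAB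
    by_cases h1 : A = D₁
    · by_cases h2 : B = D₂
      · simp [h1, h2, hd1, hd2]
      · have := hmax B hB (by rw [h1] at hAB; exact (Ne.symm hAB)) h2
        have := min_le_right d₁ d₂
        subst h1; linarith [min_le_right d₁ d₂, this]
    · by_cases h2 : A = D₂
      · by_cases h3 : B = D₁
        · subst h2 h3; linarith
        · have hB' := hmax B hB h3 (by rw [h2] at hAB; exact (Ne.symm hAB))
          subst h2; linarith [min_le_left d₁ d₂, hB']
      · have hA' := hmax A hA h1 h2
        by_cases h3 : B = D₁
        · subst h3; linarith [min_le_right d₁ d₂, hA']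
        · by_cases h4 : B = D₂
          · subst h4; linarith [min_le_left d₁ d₂, hA']
          · have hB' := hmax B hB h3 h4
            linarith [min_le_left d₁ d₂, min_le_right d₁ d₂, hA', hB']
  have hmaxle : ∀ A ∈ N, Metric.diam A ≤ max d₁ d₂ := by
    intro A hA
    by_cases h1 : A = D₁
    · subst h1; exact le_max_left _ _
    by_cases h2 : A = D₂
    · subst h2; exact le_max_right _ _
    exact le_trans (hmax A hA h1 h2) (min_le_max)
  have hmaxle' : max d₁ d₂ ≤ d₁ + d₂ := by
    rcases max_cases d₁ d₂ with ⟨h, _⟩ | ⟨h, _⟩ <;> linarith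
  constructor
  · -- diameter bound
    apply Metric.diam_le_of_forall_dist_le (by linarith)
    intro x hx y hy
    apply le_of_forall_pos_le_add
    intro ε hε
    have hε2 : (0:ℝ) < ε/2 := by linarith
    rcases hx with hx | hx
    · rcases hy with hy | hy
      · have := Metric.dist_le_diam_of_mem hCb hx hy
        linarith
      · simp only [Set.mem_iUnion] at hy
        obtain ⟨B, hB, hyB⟩ := hy
        obtain ⟨p, hp, hpy⟩ := key B hB y hyB ε hε
        have h1 : dist x y ≤ dist x p + dist p y := dist_triangle x p y
        have h2 : dist x p ≤ a := Metric.dist_le_diam_of_mem hCb hx hp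
        have h3 : dist p y = dist y p := dist_comm p y
        have h4 := hmaxle B hB
        linarith
    · simp only [Set.mem_iUnion] at hx
      obtain ⟨A, hA, hxA⟩ := hx
      rcases hy with hy | hy
      · obtain ⟨p, hp, hpx⟩ := key A hA x hxA ε hε
        have h1 : dist x y ≤ dist x p + dist p y := dist_triangle x p y
        have h2 : dist p y ≤ a := Metric.dist_le_diam_of_mem hCb hp hy
        have h4 := hmaxle A hA
        linarith
      · simp only [Set.mem_iUnion] at hy
        obtain ⟨B, hB, hyB⟩ := hy
        by_cases hAB : A = B
        · subst hAB
          have := Metric.dist_le_diam_of_mem (hb A hA) hxA hyB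
          have h4 := hmaxle A hA
          linarith
        · obtain ⟨p, hp, hpx⟩ := key A hA x hxA (ε/2) hε2
          obtain ⟨q, hq, hqy⟩ := key B hB y hyB (ε/2) hε2
          have h1 : dist x y ≤ dist x p + dist p q + dist q y :=
            dist_triangle4 x p q y
          have h2 : dist p q ≤ a := Metric.dist_le_diam_of_mem hCb hp hq
          have h3 : dist q y = dist y q := dist_comm q y
          have h4 := pair A hA B hB hAB
          linarith
  · -- sum bound
    have hD₂' : D₂ ∈ N.erase D₁ := Finset.mem_erase.mpr ⟨Ne.symm hD, hD₂⟩
    have e1 : ∑ C' ∈ N, Metric.diam C'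
        = d₁ + ∑ C' ∈ N.erase D₁, Metric.diam C' :=
      (Finset.add_sum_erase N _ hD₁).symm
    have e2 : ∑ C' ∈ N.erase D₁, Metric.diam C'
        = d₂ + ∑ C' ∈ (N.erase D₁).erase D₂, Metric.diam C' :=
      (Finset.add_sum_erase _ _ hD₂').symm
    have hcard2 : 3 ≤ ((N.erase D₁).erase D₂).card := by
      have h1 : (N.erase D₁).card = N.card - 1 := Finset.card_erase_of_mem hD₁
      have h2 : ((N.erase D₁).erase D₂).card = (N.erase D₁).card - 1 :=
        Finset.card_erase_of_mem hD₂'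
      omega
    have hsum : 3 * a ≤ ∑ C' ∈ (N.erase D₁).erase D₂, Metric.diam C' := by
      have hle : ∀ C' ∈ (N.erase D₁).erase D₂, a ≤ Metric.diam C' := by
        intro C' hC'
        exact hdiam C' (Finset.mem_of_mem_erase (Finset.mem_of_mem_erase hC'))
      have := Finset.card_nsmul_le_sum _ _ _ hle
      rw [nsmul_eq_mul] at this
      have h3 : (3:ℝ) * a ≤ (((N.erase D₁).erase D₂).card : ℝ) * a := by
        apply mul_le_mul_of_nonneg_right _ ha0
        exact_mod_cast hcard2
      linarith
    rw [e1, e2]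
    linarith
end

section
/- For any finite partition 𝒞 of a finite metric space X into nonempty clusters, there exists a partition 𝒞* of X, each of whose clusters is a union of clusters of 𝒞, such that ∑_{C ∈ 𝒞*} diam(C) ≤ ∑_{C ∈ 𝒞} diam(C) and for every C ∈ 𝒞*, the number of clusters C' ∈ 𝒞* with C' ≠ C, d(C,C') ≤ diam(C), and diam(C') ≥ diam(C) is at most 4. -/
open Finset in
private lemma diam_merge {X : Type*} [MetricSpace X] [Fintype X]
    (C : Set X) (S : Finset (Set X)) (hC : C ∈ S)
    (hd : ∀ D ∈ S, ∃ a ∈ D, ∃ b ∈ C, dist a b ≤ Metric.diam C)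
    (hbig : ∀ D ∈ S, Metric.diam C ≤ Metric.diam D)
    (hcard : 5 ≤ S.card) :
    Metric.diam (⋃ D ∈ S, D) ≤ ∑ D ∈ S, Metric.diam D := by
  classical
  have hnonneg : (0:ℝ) ≤ ∑ D ∈ S, Metric.diam D :=
    Finset.sum_nonneg fun D _ => Metric.diam_nonneg
  apply Metric.diam_le_of_forall_dist_le hnonneg
  intro p hp q hq
  simp only [Set.mem_iUnion, exists_prop] at hp hq
  obtain ⟨Di, hDi, hpDi⟩ := hp
  obtain ⟨Dj, hDj, hqDj⟩ := hq
  have bdd : ∀ s : Set X, Bornology.IsBounded s := fun s => (Set.toFinite s).isBounded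
  by_cases hij : Di = Dj
  · subst hij
    calc dist p q ≤ Metric.diam Di := Metric.dist_le_diam_of_mem (bdd Di) hpDi hqDj
      _ ≤ ∑ D ∈ S, Metric.diam D :=
        Finset.single_le_sum (f := fun D => Metric.diam D)
          (fun D _ => Metric.diam_nonneg) hDi
  · obtain ⟨ai, hai, bi, hbi, hdi⟩ := hd Di hDi
    obtain ⟨aj, haj, bj, hbj, hdj⟩ := hd Dj hDj
    have t1 : dist p q ≤ dist p bi + dist bi q := dist_triangle _ _ _
    have t2 : dist p bi ≤ dist p ai + dist ai bi := dist_triangle _ _ _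
    have t3 : dist bi q ≤ dist bi bj + dist bj q := dist_triangle _ _ _
    have t4 : dist bj q ≤ dist bj aj + dist aj q := dist_triangle _ _ _
    have e1 : dist p ai ≤ Metric.diam Di := Metric.dist_le_diam_of_mem (bdd Di) hpDi hai
    have e2 : dist ai bi ≤ Metric.diam C := hdi
    have e3 : dist bi bj ≤ Metric.diam C := Metric.dist_le_diam_of_mem (bdd C) hbi hbj
    have e4 : dist bj aj ≤ Metric.diam C := by rw [dist_comm]; exact hdj
    have e5 : dist aj q ≤ Metric.diam Dj := by
      rw [dist_comm]; exact Metric.dist_le_diam_of_mem (bdd Dj) hqDj haj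
    have h2 : dist p q ≤ Metric.diam Di + Metric.diam C + Metric.diam C +
        Metric.diam C + Metric.diam Dj := by linarith
    refine h2.trans ?_
    have hTsub : ({Di, Dj} : Finset (Set X)) ⊆ S := by
      intro D hD
      simp only [Finset.mem_insert, Finset.mem_singleton] at hD
      rcases hD with rfl | rfl <;> assumption
    have hsplit := Finset.sum_sdiff (f := fun D => Metric.diam D) hTsub
    have hpair : ∑ D ∈ ({Di, Dj} : Finset (Set X)), Metric.diam D
        = Metric.diam Di + Metric.diam Dj := Finset.sum_pair hij
    have hcard2 : (3:ℝ) ≤ ((S \ {Di, Dj}).card : ℝ) := by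
      have h2' : ({Di, Dj} : Finset (Set X)).card ≤ 2 :=
        (Finset.card_insert_le _ _).trans (by simp)
      have hc := Finset.card_sdiff_of_subset hTsub
      have : 3 ≤ (S \ {Di, Dj}).card := by omega
      exact_mod_cast this
    have hrest : 3 * Metric.diam C ≤ ∑ D ∈ S \ ({Di, Dj} : Finset (Set X)), Metric.diam D := by
      calc 3 * Metric.diam C ≤ ((S \ ({Di, Dj} : Finset (Set X))).card : ℝ) * Metric.diam C :=
            mul_le_mul_of_nonneg_right hcard2 Metric.diam_nonneg
        _ = ∑ _D ∈ S \ ({Di, Dj} : Finset (Set X)), Metric.diam C := by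
            rw [Finset.sum_const, nsmul_eq_mul]
        _ ≤ ∑ D ∈ S \ ({Di, Dj} : Finset (Set X)), Metric.diam D := by
            apply Finset.sum_le_sum
            intro D hD
            exact hbig D (Finset.mem_sdiff.mp hD).1
    have : Metric.diam Di + Metric.diam Dj + 3 * Metric.diam C ≤ ∑ D ∈ S, Metric.diam D := by
      rw [← hsplit, hpair]
      linarith
    linarith

private lemma main_aux {X : Type*} [MetricSpace X] [Fintype X] :
    ∀ (n : ℕ) (𝒞 : Finset (Set X)), 𝒞.card ≤ n →
    (∀ C ∈ 𝒞, Set.Nonempty C) →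
    ((𝒞 : Set (Set X)).PairwiseDisjoint id) →
    (⋃ C ∈ 𝒞, C = Set.univ) →
    ∃ 𝒞' : Finset (Set X),
      (∀ C ∈ 𝒞', Set.Nonempty C) ∧
      (𝒞' : Set (Set X)).PairwiseDisjoint id ∧
      (⋃ C ∈ 𝒞', C = Set.univ) ∧
      (∀ C ∈ 𝒞', ∃ S ⊆ 𝒞, C = ⋃ C' ∈ S, C') ∧
      (∑ C ∈ 𝒞', Metric.diam C ≤ ∑ C ∈ 𝒞, Metric.diam C) ∧
      (∀ C ∈ 𝒞', {C' | C' ∈ 𝒞' ∧ C' ≠ C ∧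
          sInf (Set.image2 dist C C') ≤ Metric.diam C ∧
          Metric.diam C ≤ Metric.diam C'}.ncard ≤ 4) := by
  classical
  intro n
  induction n with
  | zero =>
    intro 𝒞 hcard hne hdisj hcov
    have h𝒞 : 𝒞 = ∅ := Finset.card_eq_zero.mp (Nat.le_zero.mp hcard)
    subst h𝒞
    refine ⟨∅, by simp, by simp, hcov, by simp, le_rfl, by simp⟩
  | succ n ih =>
    intro 𝒞 hcard hne hdisj hcov
    set P : Set X → Set X → Prop := fun C C' => C' ≠ C ∧
        sInf (Set.image2 dist C C') ≤ Metric.diam C ∧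
        Metric.diam C ≤ Metric.diam C' with hP
    by_cases h4 : ∀ C ∈ 𝒞, (𝒞.filter (P C)).card ≤ 4
    · refine ⟨𝒞, hne, hdisj, hcov, ?_, le_rfl, ?_⟩
      · intro C hC
        exact ⟨{C}, by simpa using hC, by simp⟩
      · intro C hC
        have heq : {C' | C' ∈ 𝒞 ∧ C' ≠ C ∧
            sInf (Set.image2 dist C C') ≤ Metric.diam C ∧
            Metric.diam C ≤ Metric.diam C'} = ↑(𝒞.filter (P C)) := by
          ext C'
          simp [hP, and_assoc]
        rw [heq, Set.ncard_coe_finset]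
        exact h4 C hC
    · push_neg at h4
      obtain ⟨C, hC𝒞, hbignbrs⟩ := h4
      set N : Finset (Set X) := 𝒞.filter (P C) with hN
      set S : Finset (Set X) := insert C N with hSdef
      have hCnotN : C ∉ N := by
        intro h
        exact ((Finset.mem_filter.mp h).2).1 rfl
      have hScard : 6 ≤ S.card := by
        rw [hSdef, Finset.card_insert_of_notMem hCnotN]
        omega
      have hSsub : S ⊆ 𝒞 := by
        intro D hD
        rcases Finset.mem_insert.mp hD with h | hD
        · exact h ▸ hC𝒞
        · exact (Finset.mem_filter.mp hD).1
      have hCS : C ∈ S := Finset.mem_insert_self _ _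
      have hbig : ∀ D ∈ S, Metric.diam C ≤ Metric.diam D := by
        intro D hD
        rcases Finset.mem_insert.mp hD with h | hD
        · exact h ▸ le_rfl
        · exact ((Finset.mem_filter.mp hD).2).2.2
      have hd : ∀ D ∈ S, ∃ a ∈ D, ∃ b ∈ C, dist a b ≤ Metric.diam C := by
        intro D hD
        rcases Finset.mem_insert.mp hD with h | hD
        · subst h
          obtain ⟨x, hx⟩ := hne D hC𝒞
          exact ⟨x, hx, x, hx, by simp [Metric.diam_nonneg]⟩
        · have hD𝒞 := (Finset.mem_filter.mp hD).1
          have hinf := ((Finset.mem_filter.mp hD).2).2.1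
          have hne' : (Set.image2 dist C D).Nonempty :=
            Set.Nonempty.image2 (hne C hC𝒞) (hne D hD𝒞)
          have hfin : (Set.image2 dist C D).Finite :=
            Set.Finite.image2 _ (Set.toFinite C) (Set.toFinite D)
          obtain ⟨b, hb, a, ha, heq⟩ := hne'.csInf_mem hfin
          exact ⟨a, ha, b, hb, by rw [dist_comm, heq]; exact hinf⟩
      set M : Set X := ⋃ D ∈ S, D with hM
      have hCsubM : C ⊆ M := Set.subset_biUnion_of_mem (u := fun D => D) hCS
      have hMne : M.Nonempty := (hne C hC𝒞).mono hCsubM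
      have hMnot : M ∉ 𝒞 \ S := by
        intro h
        have hM𝒞 : M ∈ 𝒞 := (Finset.mem_sdiff.mp h).1
        have hMnS : M ∉ S := (Finset.mem_sdiff.mp h).2
        have hMC : M ≠ C := fun h' => hMnS (h' ▸ hCS)
        have hdisj' : Disjoint M C := hdisj hM𝒞 hC𝒞 hMC
        obtain ⟨x, hx⟩ := hne C hC𝒞
        exact Set.disjoint_left.mp hdisj' (hCsubM hx) hx
      set 𝒞₂ : Finset (Set X) := insert M (𝒞 \ S) with h𝒞₂
      have hMdisj : ∀ D ∈ 𝒞 \ S, Disjoint M D := by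
        intro D hD
        have hD𝒞 : D ∈ 𝒞 := (Finset.mem_sdiff.mp hD).1
        have hDnS : D ∉ S := (Finset.mem_sdiff.mp hD).2
        rw [hM, Set.disjoint_left]
        rintro x hx hxD
        simp only [Set.mem_iUnion, exists_prop] at hx
        obtain ⟨E, hES, hxE⟩ := hx
        have hE𝒞 : E ∈ 𝒞 := hSsub hES
        have hED : E ≠ D := fun h => hDnS (h ▸ hES)
        exact Set.disjoint_left.mp (hdisj hE𝒞 hD𝒞 hED) hxE hxD
      have hcard₂ : 𝒞₂.card ≤ n := by
        have h1 : (𝒞 \ S).card = 𝒞.card - S.card := Finset.card_sdiff_of_subset hSsub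
        have h2 : S.card ≤ 𝒞.card := Finset.card_le_card hSsub
        have h3 : 𝒞₂.card ≤ (𝒞 \ S).card + 1 := Finset.card_insert_le _ _
        omega
      have hne₂ : ∀ D ∈ 𝒞₂, Set.Nonempty D := by
        intro D hD
        rcases Finset.mem_insert.mp hD with h | hD
        · exact h ▸ hMne
        · exact hne D (Finset.mem_sdiff.mp hD).1
      have hdisj₂ : ((𝒞₂ : Set (Set X))).PairwiseDisjoint id := by
        rw [h𝒞₂]
        push_cast
        apply Set.PairwiseDisjoint.insert
        · exact hdisj.subset (by intro D hD; exact (Finset.mem_sdiff.mp (by exact_mod_cast hD)).1)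
        · intro D hD _
          exact hMdisj D (by exact_mod_cast hD)
      have hcov₂ : ⋃ D ∈ 𝒞₂, D = Set.univ := by
        apply Set.eq_univ_of_univ_subset
        intro x _
        have hx : x ∈ ⋃ C' ∈ 𝒞, C' := hcov ▸ Set.mem_univ x
        simp only [Set.mem_iUnion, exists_prop] at hx ⊢
        obtain ⟨D, hD𝒞, hxD⟩ := hx
        by_cases hDS : D ∈ S
        · exact ⟨M, Finset.mem_insert_self _ _, by
            rw [hM]; simp only [Set.mem_iUnion, exists_prop]; exact ⟨D, hDS, hxD⟩⟩
        · exact ⟨D, Finset.mem_insert_of_mem (Finset.mem_sdiff.mpr ⟨hD𝒞, hDS⟩), hxD⟩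
      have hsum₂ : ∑ D ∈ 𝒞₂, Metric.diam D ≤ ∑ D ∈ 𝒞, Metric.diam D := by
        rw [h𝒞₂, Finset.sum_insert hMnot]
        have hkey : Metric.diam M ≤ ∑ D ∈ S, Metric.diam D :=
          diam_merge C S hCS hd hbig (by omega)
        have := Finset.sum_sdiff (f := fun D => Metric.diam D) hSsub
        linarith
      obtain ⟨𝒞', h1, h2, h3, h4', h5, h6⟩ := ih 𝒞₂ hcard₂ hne₂ hdisj₂ hcov₂
      refine ⟨𝒞', h1, h2, h3, ?_, h5.trans hsum₂, h6⟩
      intro D hD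
      obtain ⟨S₂, hS₂sub, hS₂eq⟩ := h4' D hD
      by_cases hMS₂ : M ∈ S₂
      · refine ⟨(S₂ \ {M}) ∪ S, ?_, ?_⟩
        · intro E hE
          rcases Finset.mem_union.mp hE with hE | hE
          · have hE' := hS₂sub (Finset.mem_sdiff.mp hE).1
            rcases Finset.mem_insert.mp hE' with h | hE''
            · exact absurd (Finset.mem_sdiff.mp hE).2 (by simp [h])
            · exact (Finset.mem_sdiff.mp hE'').1
          · exact hSsub hE
        · rw [hS₂eq]
          apply Set.Subset.antisymm
          · intro x hx
            simp only [Set.mem_iUnion, exists_prop] at hx ⊢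
            obtain ⟨E, hES₂, hxE⟩ := hx
            by_cases hEM : E = M
            · subst hEM
              rw [hM] at hxE
              simp only [Set.mem_iUnion, exists_prop] at hxE
              obtain ⟨F, hFS, hxF⟩ := hxE
              exact ⟨F, Finset.mem_union_right _ hFS, hxF⟩
            · exact ⟨E, Finset.mem_union_left _
                (Finset.mem_sdiff.mpr ⟨hES₂, by simp [hEM]⟩), hxE⟩
          · intro x hx
            simp only [Set.mem_iUnion, exists_prop] at hx ⊢
            obtain ⟨E, hE, hxE⟩ := hx
            rcases Finset.mem_union.mp hE with hE' | hE'
            · exact ⟨E, (Finset.mem_sdiff.mp hE').1, hxE⟩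
            · refine ⟨M, hMS₂, ?_⟩
              rw [hM]
              simp only [Set.mem_iUnion, exists_prop]
              exact ⟨E, hE', hxE⟩
      · refine ⟨S₂, ?_, hS₂eq⟩
        intro E hE
        have hE' := hS₂sub hE
        rcases Finset.mem_insert.mp hE' with h | hE''
        · exact absurd (h ▸ hE) hMS₂
        · exact (Finset.mem_sdiff.mp hE'').1

theorem stmt3 {X : Type*} [MetricSpace X] [Fintype X] (𝒞 : Finset (Set X))
    (hne : ∀ C ∈ 𝒞, Set.Nonempty C)
    (hdisj : (𝒞 : Set (Set X)).PairwiseDisjoint id)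
    (hcov : ⋃ C ∈ 𝒞, C = Set.univ) :
    ∃ 𝒞' : Finset (Set X),
      (∀ C ∈ 𝒞', Set.Nonempty C) ∧
      (𝒞' : Set (Set X)).PairwiseDisjoint id ∧
      (⋃ C ∈ 𝒞', C = Set.univ) ∧
      (∀ C ∈ 𝒞', ∃ S ⊆ 𝒞, C = ⋃ C' ∈ S, C') ∧
      (∑ C ∈ 𝒞', Metric.diam C ≤ ∑ C ∈ 𝒞, Metric.diam C) ∧
      (∀ C ∈ 𝒞', {C' | C' ∈ 𝒞' ∧ C' ≠ C ∧
          sInf (Set.image2 dist C C') ≤ Metric.diam C ∧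
          Metric.diam C ≤ Metric.diam C'}.ncard ≤ 4) := by
  exact main_aux 𝒞.card 𝒞 le_rfl hne hdisj hcov
end

section
/- For any finite partition 𝒞 of a finite metric space X into nonempty clusters, there exists a partition 𝒞' of X whose clusters are unions of clusters of 𝒞, with ∑_{C ∈ 𝒞'} diam(C) ≤ ∑_{C ∈ 𝒞} diam(C), such that 𝒞' is packed: for every subset 𝒞'' ⊆ 𝒞' with |𝒞''| ≥ 2, ∑_{C ∈ 𝒞''} diam(C) < diam(⋃_{C ∈ 𝒞''} C). -/
private lemma stmt5_aux {X : Type*} [MetricSpace X] [Fintype X] :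
    ∀ n (𝒞 : Finset (Set X)), 𝒞.card ≤ n →
    (∀ C ∈ 𝒞, Set.Nonempty C) →
    (𝒞 : Set (Set X)).PairwiseDisjoint id →
    (⋃ C ∈ 𝒞, C = Set.univ) →
    ∃ 𝒞' : Finset (Set X),
      (∀ C ∈ 𝒞', Set.Nonempty C) ∧
      (𝒞' : Set (Set X)).PairwiseDisjoint id ∧
      (⋃ C ∈ 𝒞', C = Set.univ) ∧
      (∀ C ∈ 𝒞', ∃ S ⊆ 𝒞, C = ⋃ C' ∈ S, C') ∧
      (∑ C ∈ 𝒞', Metric.diam C ≤ ∑ C ∈ 𝒞, Metric.diam C) ∧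
      (∀ 𝒞'' ⊆ 𝒞', 2 ≤ 𝒞''.card →
        ∑ C ∈ 𝒞'', Metric.diam C < Metric.diam (⋃ C ∈ 𝒞'', C)) := by
  intro n
  induction n with
  | zero =>
    intro 𝒞 hcard hne hdisj hcov
    have h0 : 𝒞 = ∅ := Finset.card_eq_zero.mp (Nat.le_zero.mp hcard)
    subst h0
    refine ⟨∅, by simp, by simp, by simpa using hcov, by simp, le_refl _, ?_⟩
    intro 𝒞'' hsub hc
    have : 𝒞'' = ∅ := Finset.subset_empty.mp hsub
    subst this; simp at hc
  | succ n ih =>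
    intro 𝒞 hcard hne hdisj hcov
    classical
    by_cases hp : ∀ 𝒞'' ⊆ 𝒞, 2 ≤ 𝒞''.card →
        ∑ C ∈ 𝒞'', Metric.diam C < Metric.diam (⋃ C ∈ 𝒞'', C)
    · exact ⟨𝒞, hne, hdisj, hcov,
        fun C hC => ⟨{C}, by simpa using hC, by simp⟩, le_refl _, hp⟩
    · push_neg at hp
      obtain ⟨P, hPsub, hPcard, hPdiam⟩ := hp
      set U : Set X := ⋃ C ∈ P, C with hU
      obtain ⟨C₀, hC₀⟩ := Finset.card_pos.mp (by omega : 0 < P.card)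
      have hUne : U.Nonempty := by
        obtain ⟨x, hx⟩ := hne C₀ (hPsub hC₀)
        exact ⟨x, Set.mem_biUnion hC₀ hx⟩
      have hUdisj : ∀ C ∈ 𝒞 \ P, Disjoint U C := by
        intro C hC
        simp only [Finset.mem_sdiff] at hC
        rw [Set.disjoint_left]
        rintro x hx hxC
        simp only [hU, Set.mem_iUnion] at hx
        obtain ⟨C', hC', hxC'⟩ := hx
        have hne' : C' ≠ C := fun h => hC.2 (h ▸ hC')
        exact Set.disjoint_left.mp (hdisj (hPsub hC') hC.1 hne') hxC' hxC
      have hUnot : U ∉ 𝒞 \ P := by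
        intro h
        have hd := hUdisj U h
        obtain ⟨x, hx⟩ := hUne
        exact Set.disjoint_left.mp hd hx hx
      set 𝒟 : Finset (Set X) := insert U (𝒞 \ P) with h𝒟
      have hPle : P.card ≤ 𝒞.card := Finset.card_le_card hPsub
      have hcard𝒟 : 𝒟.card ≤ n := by
        have h1 : 𝒟.card ≤ (𝒞 \ P).card + 1 := Finset.card_insert_le _ _
        have h2 : (𝒞 \ P).card = 𝒞.card - P.card := Finset.card_sdiff_of_subset hPsub
        omega
      have hne𝒟 : ∀ C ∈ 𝒟, Set.Nonempty C := by
        intro C hC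
        rcases Finset.mem_insert.mp hC with h | h
        · exact h ▸ hUne
        · exact hne C (Finset.mem_sdiff.mp h).1
      have hdisj𝒟 : (𝒟 : Set (Set X)).PairwiseDisjoint id := by
        rw [h𝒟, Finset.coe_insert]
        refine Set.PairwiseDisjoint.insert ?_ ?_
        · exact hdisj.subset (by rw [Finset.coe_sdiff]; exact Set.diff_subset)
        · intro b hb _
          exact hUdisj b hb
      have hcov𝒟 : ⋃ C ∈ 𝒟, C = Set.univ := by
        rw [h𝒟, Finset.set_biUnion_insert]
        have : U ∪ ⋃ C ∈ 𝒞 \ P, C = ⋃ C ∈ P ∪ (𝒞 \ P), C := by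
          rw [Finset.set_biUnion_union]
        rw [this, Finset.union_sdiff_of_subset hPsub, hcov]
      have hsum𝒟 : ∑ C ∈ 𝒟, Metric.diam C ≤ ∑ C ∈ 𝒞, Metric.diam C := by
        rw [h𝒟, Finset.sum_insert hUnot]
        have h3 := Finset.sum_sdiff (f := fun C => Metric.diam C) hPsub
        linarith
      obtain ⟨𝒞', g1, g2, g3, g4, g5, g6⟩ := ih 𝒟 hcard𝒟 hne𝒟 hdisj𝒟 hcov𝒟
      refine ⟨𝒞', g1, g2, g3, ?_, le_trans g5 hsum𝒟, g6⟩
      intro C hC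
      obtain ⟨S, hS, hCS⟩ := g4 C hC
      by_cases hUS : U ∈ S
      · refine ⟨S.erase U ∪ P, ?_, ?_⟩
        · intro x hx
          rcases Finset.mem_union.mp hx with h | h
          · obtain ⟨hxU, hxS⟩ := Finset.mem_erase.mp h
            rcases Finset.mem_insert.mp (hS hxS) with h' | h'
            · exact absurd h' hxU
            · exact (Finset.mem_sdiff.mp h').1
          · exact hPsub h
        · rw [Finset.set_biUnion_union, hCS, ← hU]
          conv_lhs => rw [← Finset.insert_erase hUS]
          rw [Finset.set_biUnion_insert, Set.union_comm]
      · refine ⟨S, ?_, hCS⟩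
        intro x hx
        rcases Finset.mem_insert.mp (hS hx) with h | h
        · exact absurd (h ▸ hx) hUS
        · exact (Finset.mem_sdiff.mp h).1

theorem stmt5 {X : Type*} [MetricSpace X] [Fintype X] (𝒞 : Finset (Set X))
    (hne : ∀ C ∈ 𝒞, Set.Nonempty C)
    (hdisj : (𝒞 : Set (Set X)).PairwiseDisjoint id)
    (hcov : ⋃ C ∈ 𝒞, C = Set.univ) :
    ∃ 𝒞' : Finset (Set X),
      (∀ C ∈ 𝒞', Set.Nonempty C) ∧
      (𝒞' : Set (Set X)).PairwiseDisjoint id ∧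
      (⋃ C ∈ 𝒞', C = Set.univ) ∧
      (∀ C ∈ 𝒞', ∃ S ⊆ 𝒞, C = ⋃ C' ∈ S, C') ∧
      (∑ C ∈ 𝒞', Metric.diam C ≤ ∑ C ∈ 𝒞, Metric.diam C) ∧
      (∀ 𝒞'' ⊆ 𝒞', 2 ≤ 𝒞''.card →
        ∑ C ∈ 𝒞'', Metric.diam C < Metric.diam (⋃ C ∈ 𝒞'', C)) := by
  exact stmt5_aux 𝒞.card 𝒞 le_rfl hne hdisj hcov
end

section
/- Let 𝒞 be a packed partition of a finite metric space (every subfamily 𝒞'' of size ≥ 2 satisfies ∑_{C ∈ 𝒞''} diam(C) < diam(⋃ 𝒞'')). Suppose C ∈ 𝒞 and 𝒞* ⊆ 𝒞 \ {C} is a nonempty family such that for each C' ∈ 𝒞* there exists x ∈ C with sup_{y ∈ C'} d(x,y) ≤ diam(C'). Then diam(C ∪ ⋃_{C' ∈ 𝒞*} C') ≤ diam(C) + ∑_{C' ∈ 𝒞*} diam(C'), contradicting packedness; hence no such family 𝒞* exists when diam values are positive. -/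
theorem stmt6 {X : Type*} [MetricSpace X] [Fintype X] [DecidableEq (Set X)]
    (𝒞 : Finset (Set X))
    (hne : ∀ C ∈ 𝒞, Set.Nonempty C)
    (hdisj : (𝒞 : Set (Set X)).PairwiseDisjoint id)
    (hcov : ⋃ C ∈ 𝒞, C = Set.univ)
    (hpacked : ∀ 𝒞'' ⊆ 𝒞, 2 ≤ 𝒞''.card →
      ∑ C ∈ 𝒞'', Metric.diam C < Metric.diam (⋃ C ∈ 𝒞'', C))
    (C : Set X) (hC : C ∈ 𝒞)
    (𝒞s : Finset (Set X)) (h𝒞s : 𝒞s ⊆ 𝒞.erase C) (h𝒞sne : 𝒞s.Nonempty)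
    (hclose : ∀ C' ∈ 𝒞s, ∃ x ∈ C, ∀ y ∈ C', dist x y ≤ Metric.diam C')
    (hpos : ∀ D ∈ 𝒞, 0 < Metric.diam D) :
    Metric.diam (C ∪ ⋃ C' ∈ 𝒞s, C') ≤
        Metric.diam C + ∑ C' ∈ 𝒞s, Metric.diam C' ∧ False := by
  have hbdd : ∀ s : Set X, Bornology.IsBounded s := fun s => (Set.toFinite s).isBounded
  have hsumnn : (0:ℝ) ≤ ∑ C' ∈ 𝒞s, Metric.diam C' :=
    Finset.sum_nonneg fun _ _ => Metric.diam_nonneg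
  have hsingle : ∀ A ∈ 𝒞s, Metric.diam A ≤ ∑ C' ∈ 𝒞s, Metric.diam C' := fun A hA =>
    Finset.single_le_sum (f := fun s => Metric.diam s) (fun _ _ => Metric.diam_nonneg) hA
  have hpair : ∀ A ∈ 𝒞s, ∀ B ∈ 𝒞s, A ≠ B →
      Metric.diam A + Metric.diam B ≤ ∑ C' ∈ 𝒞s, Metric.diam C' := by
    intro A hA B hB hAB
    have hsub : ({A, B} : Finset (Set X)) ⊆ 𝒞s := by
      intro x hx
      simp only [Finset.mem_insert, Finset.mem_singleton] at hx
      rcases hx with rfl | rfl <;> assumption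
    have := Finset.sum_le_sum_of_subset_of_nonneg hsub
      (fun i _ _ => Metric.diam_nonneg (s := i))
    rwa [Finset.sum_pair hAB] at this
  have key : Metric.diam (C ∪ ⋃ C' ∈ 𝒞s, C') ≤
      Metric.diam C + ∑ C' ∈ 𝒞s, Metric.diam C' := by
    apply Metric.diam_le_of_forall_dist_le (by positivity)
    intro u hu v hv
    simp only [Set.mem_union, Set.mem_iUnion, exists_prop] at hu hv
    rcases hu with hu | ⟨A, hA, hu⟩ <;> rcases hv with hv | ⟨B, hB, hv⟩
    · calc dist u v ≤ Metric.diam C := Metric.dist_le_diam_of_mem (hbdd C) hu hv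
        _ ≤ _ := le_add_of_nonneg_right hsumnn
    · obtain ⟨x, hxC, hx⟩ := hclose B hB
      calc dist u v ≤ dist u x + dist x v := dist_triangle u x v
        _ ≤ Metric.diam C + Metric.diam B :=
          add_le_add (Metric.dist_le_diam_of_mem (hbdd C) hu hxC) (hx v hv)
        _ ≤ _ := by linarith [hsingle B hB]
    · obtain ⟨x, hxC, hx⟩ := hclose A hA
      calc dist u v ≤ dist u x + dist x v := dist_triangle u x v
        _ ≤ Metric.diam A + Metric.diam C := by
          rw [dist_comm u x]
          exact add_le_add (hx u hu) (Metric.dist_le_diam_of_mem (hbdd C) hxC hv)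
        _ ≤ _ := by linarith [hsingle A hA]
    · by_cases hAB : A = B
      · subst hAB
        calc dist u v ≤ Metric.diam A := Metric.dist_le_diam_of_mem (hbdd A) hu hv
          _ ≤ _ := by linarith [hsingle A hA, Metric.diam_nonneg (s := C)]
      · obtain ⟨x, hxC, hx⟩ := hclose A hA
        obtain ⟨y, hyC, hy⟩ := hclose B hB
        calc dist u v ≤ dist u x + dist x y + dist y v :=
            dist_triangle4 u x y v
          _ ≤ Metric.diam A + Metric.diam C + Metric.diam B := by
            rw [dist_comm u x]
            exact add_le_add (add_le_add (hx u hu)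
              (Metric.dist_le_diam_of_mem (hbdd C) hxC hyC)) (hy v hv)
          _ ≤ _ := by linarith [hpair A hA B hB hAB]
  refine ⟨key, ?_⟩
  have hCnot : C ∉ 𝒞s := fun h => (Finset.mem_erase.mp (h𝒞s h)).1 rfl
  have hsub : insert C 𝒞s ⊆ 𝒞 := by
    intro x hx
    rcases Finset.mem_insert.mp hx with rfl | hx
    · exact hC
    · exact Finset.mem_of_mem_erase (h𝒞s hx)
  have hcard : 2 ≤ (insert C 𝒞s).card := by
    rw [Finset.card_insert_of_notMem hCnot]
    have := Finset.card_pos.mpr h𝒞sne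
    omega
  have hp := hpacked (insert C 𝒞s) hsub hcard
  rw [Finset.sum_insert hCnot, Finset.set_biUnion_insert] at hp
  linarith
end

section
/- Let G = (V, E) be a finite simple graph with at least one edge and maximum degree greater than 2, and k ≥ 3. Construct a metric space X whose points are V ∪ {x_1, ..., x_{k−3}}, where d(u,v) = 2 if (u,v) ∈ E, d(u,v) = 1 if u ≠ v and (u,v) ∉ E (u,v ∈ V), and d(x_i, p) = 2 for all i and all other points p. Then this d is a metric, and G has a proper 3-coloring if and only if X can be partitioned into at most k clusters with ∑ diam(C)^α ≤ 3, for every α > log₂ 3. -/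
/-- Diameter of a set with respect to a raw distance function. -/
noncomputable def rawDiam {Y : Type*} (d : Y → Y → ℝ) (C : Set Y) : ℝ :=
  sSup (Set.image2 d C C)

/-- The metric of the 3-coloring → α-MSD reduction: graph vertices are at distance 2 if
adjacent, 1 otherwise; the k-3 extra points are at distance 2 from everything else. -/
def hardDist {V : Type*} [DecidableEq V] (G : SimpleGraph V) [DecidableRel G.Adj] (k : ℕ) :
    V ⊕ Fin (k - 3) → V ⊕ Fin (k - 3) → ℝ
  | Sum.inl u, Sum.inl v => if u = v then 0 else if G.Adj u v then 2 else 1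
  | Sum.inr i, Sum.inr j => if i = j then 0 else 2
  | _, _ => 2

section Helpers

variable {V : Type*} [DecidableEq V] (G : SimpleGraph V) [DecidableRel G.Adj] (k : ℕ)

lemma hd_nonneg : ∀ x y, 0 ≤ hardDist G k x y := by
  rintro (u | i) (v | j) <;> simp only [hardDist] <;> (try split_ifs) <;> norm_num

lemma hd_le_two : ∀ x y, hardDist G k x y ≤ 2 := by
  rintro (u | i) (v | j) <;> simp only [hardDist] <;> (try split_ifs) <;> norm_num

lemma hd_self : ∀ x, hardDist G k x x = 0 := by
  rintro (u | i) <;> simp [hardDist]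

lemma one_le_hd : ∀ x y, x ≠ y → 1 ≤ hardDist G k x y := by
  rintro (u | i) (v | j) h <;> simp only [hardDist]
  · rw [if_neg (by simpa using h)]; split_ifs <;> norm_num
  · norm_num
  · norm_num
  · rw [if_neg (by simpa using h)]; norm_num

lemma rawDiam_le {C : Set (V ⊕ Fin (k - 3))} {b : ℝ} (hb : 0 ≤ b)
    (h : ∀ x ∈ C, ∀ y ∈ C, hardDist G k x y ≤ b) : rawDiam (hardDist G k) C ≤ b := by
  apply Real.sSup_le _ hb
  rintro r hr
  rw [Set.mem_image2] at hr
  obtain ⟨x, hx, y, hy, rfl⟩ := hr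
  exact h x hx y hy

lemma le_rawDiam {C : Set (V ⊕ Fin (k - 3))} {x y : V ⊕ Fin (k - 3)}
    (hx : x ∈ C) (hy : y ∈ C) : hardDist G k x y ≤ rawDiam (hardDist G k) C := by
  apply le_csSup
  · refine ⟨2, ?_⟩
    rintro r hr
    rw [Set.mem_image2] at hr
    obtain ⟨a, _, b, _, rfl⟩ := hr
    exact hd_le_two G k a b
  · exact Set.mem_image2_of_mem hx hy

lemma rawDiam_nonneg {C : Set (V ⊕ Fin (k - 3))} (hC : C.Nonempty) :
    0 ≤ rawDiam (hardDist G k) C := by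
  obtain ⟨x, hx⟩ := hC
  have := le_rawDiam G k hx hx
  rwa [hd_self] at this

lemma rawDiam_singleton (x : V ⊕ Fin (k - 3)) :
    rawDiam (hardDist G k) {x} = 0 := by
  unfold rawDiam
  rw [Set.image2_singleton, hd_self, csSup_singleton]

end Helpers

theorem stmt10 {V : Type*} [Fintype V] [DecidableEq V] (G : SimpleGraph V)
    [DecidableRel G.Adj]
    (hE : G.edgeSet.Nonempty) (hdeg : ∃ v, 2 < G.degree v)
    (k : ℕ) (hk : 3 ≤ k) :
    (∀ x y, hardDist G k x y = hardDist G k y x) ∧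
    (∀ x y, hardDist G k x y = 0 ↔ x = y) ∧
    (∀ x y z, hardDist G k x z ≤ hardDist G k x y + hardDist G k y z) ∧
    (∀ α : ℝ, Real.logb 2 3 < α →
      ((∃ μ : V → Fin 3, ∀ u v, G.Adj u v → μ u ≠ μ v) ↔
        ∃ 𝒞 : Finset (Set (V ⊕ Fin (k - 3))),
          𝒞.card ≤ k ∧ (∀ C ∈ 𝒞, Set.Nonempty C) ∧
          (𝒞 : Set (Set (V ⊕ Fin (k - 3)))).PairwiseDisjoint id ∧
          (⋃ C ∈ 𝒞, C = Set.univ) ∧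
          ∑ C ∈ 𝒞, (rawDiam (hardDist G k) C) ^ α ≤ 3)) := by
  classical
  refine ⟨?_, ?_, ?_, ?_⟩
  · -- symmetry
    rintro (u | i) (v | j) <;> simp only [hardDist]
    · rcases eq_or_ne u v with rfl | h
      · simp
      · simp [h, h.symm, G.adj_comm u v]
    · rcases eq_or_ne i j with rfl | h
      · simp
      · simp [h, h.symm]
  · -- identity
    rintro (u | i) (v | j) <;> simp only [hardDist]
    · split_ifs with h1 h2 <;> simp_all
    · constructor <;> intro h <;> [norm_num at h; simp at h]
    · constructor <;> intro h <;> [norm_num at h; simp at h]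
    · split_ifs with h1 <;> simp_all
  · -- triangle
    intro x y z
    rcases eq_or_ne x z with h | hxz
    · subst h; rw [hd_self]
      exact add_nonneg (hd_nonneg G k _ _) (hd_nonneg G k _ _)
    rcases eq_or_ne y x with h | hyx
    · subst h; simp [hd_self G k]
    rcases eq_or_ne y z with h | hyz
    · subst h; simp [hd_self G k]
    · have h1 := one_le_hd G k x y (Ne.symm hyx)
      have h2 := one_le_hd G k y z hyz
      have h3 := hd_le_two G k x z
      linarith
  · -- the reduction
    intro α hα
    have hlogb : (0 : ℝ) < Real.logb 2 3 :=
      Real.logb_pos (by norm_num) (by norm_num)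
    have hα0 : 0 < α := lt_trans hlogb hα
    have h2α : (3 : ℝ) < (2 : ℝ) ^ α := by
      have h3 : (3 : ℝ) = (2 : ℝ) ^ Real.logb 2 3 :=
        (Real.rpow_logb (by norm_num) (by norm_num) (by norm_num)).symm
      rw [h3]
      exact (Real.rpow_lt_rpow_left_iff (by norm_num)).mpr hα
    constructor
    · -- coloring → clustering
      rintro ⟨μ, hμ⟩
      set cls : Fin 3 → Set (V ⊕ Fin (k - 3)) := fun c => Sum.inl '' {v | μ v = c} with hcls
      set A : Finset (Set (V ⊕ Fin (k - 3))) :=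
        (Finset.univ.filter (fun c : Fin 3 => (cls c).Nonempty)).image cls with hA
      set B : Finset (Set (V ⊕ Fin (k - 3))) :=
        Finset.univ.image (fun i : Fin (k - 3) => ({Sum.inr i} : Set (V ⊕ Fin (k - 3)))) with hB
      have hAmem : ∀ C ∈ A, ∃ c : Fin 3, (cls c).Nonempty ∧ C = cls c := by
        intro C hC
        rw [hA, Finset.mem_image] at hC
        obtain ⟨c, hc, rfl⟩ := hC
        rw [Finset.mem_filter] at hc
        exact ⟨c, hc.2, rfl⟩
      have hBmem : ∀ C ∈ B, ∃ i : Fin (k - 3), C = {Sum.inr i} := by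
        intro C hC
        rw [hB, Finset.mem_image] at hC
        obtain ⟨i, _, rfl⟩ := hC
        exact ⟨i, rfl⟩
      have hdisjAB : Disjoint A B := by
        rw [Finset.disjoint_left]
        intro C hCA hCB
        obtain ⟨c, hcne, rfl⟩ := hAmem C hCA
        obtain ⟨i, hi⟩ := hBmem _ hCB
        obtain ⟨x, hx⟩ := hcne
        have hx' : x ∈ ({Sum.inr i} : Set (V ⊕ Fin (k - 3))) := hi ▸ hx
        obtain ⟨v, _, rfl⟩ := hx
        simp at hx'
      refine ⟨A ∪ B, ?_, ?_, ?_, ?_, ?_⟩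
      · calc (A ∪ B).card ≤ A.card + B.card := Finset.card_union_le A B
          _ ≤ 3 + (k - 3) := by
              gcongr
              · calc A.card ≤ (Finset.univ.filter (fun c : Fin 3 => (cls c).Nonempty)).card :=
                    Finset.card_image_le
                  _ ≤ (Finset.univ : Finset (Fin 3)).card := Finset.card_filter_le _ _
                  _ = 3 := by simp
              · calc B.card ≤ (Finset.univ : Finset (Fin (k - 3))).card := Finset.card_image_le
                  _ = k - 3 := by simp
          _ ≤ k := by omega
      · intro C hC
        rw [Finset.mem_union] at hC
        rcases hC with hC | hC
        · obtain ⟨c, hcne, rfl⟩ := hAmem C hC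
          exact hcne
        · obtain ⟨i, rfl⟩ := hBmem C hC
          exact ⟨Sum.inr i, rfl⟩
      · intro C hC D hD hne
        simp only [Function.onFun, id_eq]
        simp only [Finset.coe_union, Set.mem_union, Finset.mem_coe] at hC hD
        have key : ∀ E F : Set (V ⊕ Fin (k - 3)),
            (E ∈ A ∨ E ∈ B) → (F ∈ A ∨ F ∈ B) → E ≠ F → ∀ x, x ∈ E → x ∈ F → False := by
          intro E F hE hF hEF x hxE hxF
          rcases hE with hE | hE <;> rcases hF with hF | hF
          · obtain ⟨c, _, rfl⟩ := hAmem E hE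
            obtain ⟨c', _, rfl⟩ := hAmem F hF
            obtain ⟨v, hv, rfl⟩ := hxE
            obtain ⟨v', hv', he⟩ := hxF
            rw [Set.mem_setOf_eq] at hv hv'
            have : v' = v := by injection he
            subst this
            exact hEF (by rw [← hv, hv'])
          · obtain ⟨c, _, rfl⟩ := hAmem E hE
            obtain ⟨i, rfl⟩ := hBmem F hF
            obtain ⟨v, _, rfl⟩ := hxE
            simp at hxF
          · obtain ⟨c, _, rfl⟩ := hAmem F hF
            obtain ⟨i, rfl⟩ := hBmem E hE
            obtain ⟨v, _, rfl⟩ := hxF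
            simp at hxE
          · obtain ⟨i, rfl⟩ := hBmem E hE
            obtain ⟨j, rfl⟩ := hBmem F hF
            simp only [Set.mem_singleton_iff] at hxE hxF
            exact hEF (by rw [hxE] at hxF; rw [Sum.inr.injEq] at hxF; rw [hxF])
        rw [Set.disjoint_left]
        intro x hxC hxD
        exact key C D hC hD hne x hxC hxD
      · ext x
        simp only [Set.mem_iUnion, Set.mem_univ, iff_true]
        rcases x with v | i
        · refine ⟨cls (μ v), ?_, ⟨v, rfl, rfl⟩⟩
          rw [Finset.mem_union]
          left
          rw [hA, Finset.mem_image]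
          exact ⟨μ v, Finset.mem_filter.mpr ⟨Finset.mem_univ _, ⟨Sum.inl v, v, rfl, rfl⟩⟩, rfl⟩
        · refine ⟨{Sum.inr i}, ?_, rfl⟩
          rw [Finset.mem_union]
          right
          rw [hB, Finset.mem_image]
          exact ⟨i, Finset.mem_univ _, rfl⟩
      · rw [Finset.sum_union hdisjAB]
        have hBzero : ∑ C ∈ B, (rawDiam (hardDist G k) C) ^ α = 0 := by
          apply Finset.sum_eq_zero
          intro C hC
          obtain ⟨i, rfl⟩ := hBmem C hC
          rw [rawDiam_singleton]
          exact Real.zero_rpow (ne_of_gt hα0)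
        have hAcard : A.card ≤ 3 := by
          calc A.card ≤ (Finset.univ.filter (fun c : Fin 3 => (cls c).Nonempty)).card :=
              Finset.card_image_le
            _ ≤ (Finset.univ : Finset (Fin 3)).card := Finset.card_filter_le _ _
            _ = 3 := by simp
        have hAle : ∑ C ∈ A, (rawDiam (hardDist G k) C) ^ α ≤ 3 := by
          have hone : ∀ C ∈ A, (rawDiam (hardDist G k) C) ^ α ≤ 1 := by
            intro C hC
            obtain ⟨c, hcne, rfl⟩ := hAmem C hC
            refine Real.rpow_le_one (rawDiam_nonneg G k hcne) ?_ (le_of_lt hα0)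
            apply rawDiam_le G k (by norm_num)
            rintro x ⟨u, hu, rfl⟩ y ⟨v, hv, rfl⟩
            rw [Set.mem_setOf_eq] at hu hv
            simp only [hardDist]
            split_ifs with h1 h2
            · norm_num
            · exact absurd (hu.trans hv.symm) (hμ u v h2)
            · norm_num
          calc ∑ C ∈ A, (rawDiam (hardDist G k) C) ^ α ≤ A.card • (1 : ℝ) :=
              Finset.sum_le_card_nsmul A _ 1 hone
            _ = (A.card : ℝ) := by simp
            _ ≤ 3 := by exact_mod_cast hAcard
        rw [hBzero, add_zero]
        exact hAle
    · -- clustering → coloring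
      rintro ⟨𝒞, hcard, hne, _, hcover, hcost⟩
      have hterm0 : ∀ C ∈ 𝒞, 0 ≤ (rawDiam (hardDist G k) C) ^ α := fun C hC =>
        Real.rpow_nonneg (rawDiam_nonneg G k (hne C hC)) α
      have hkey : ∀ C ∈ 𝒞, ∀ x ∈ C, ∀ y ∈ C, hardDist G k x y ≠ 2 := by
        intro C hC x hx y hy h2
        have hd : (2 : ℝ) ≤ rawDiam (hardDist G k) C := h2 ▸ le_rawDiam G k hx hy
        have h3 : (3 : ℝ) < (rawDiam (hardDist G k) C) ^ α :=
          lt_of_lt_of_le h2α (Real.rpow_le_rpow (by norm_num) hd (le_of_lt hα0))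
        have hle : (rawDiam (hardDist G k) C) ^ α ≤ 3 :=
          le_trans (Finset.single_le_sum hterm0 hC) hcost
        linarith
      have hcover' : ∀ x : V ⊕ Fin (k - 3), ∃ C ∈ 𝒞, x ∈ C := by
        intro x
        have : x ∈ ⋃ C ∈ 𝒞, C := hcover ▸ Set.mem_univ x
        simpa using this
      -- clusters containing an inr point are singletons
      have hsing : ∀ i : Fin (k - 3), ({Sum.inr i} : Set (V ⊕ Fin (k - 3))) ∈ 𝒞 := by
        intro i
        obtain ⟨C, hC, hiC⟩ := hcover' (Sum.inr i)
        have : C = {Sum.inr i} := by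
          apply Set.eq_singleton_iff_unique_mem.mpr
          refine ⟨hiC, ?_⟩
          intro y hy
          by_contra hne'
          apply hkey C hC (Sum.inr i) hiC y hy
          rcases y with v | j
          · rfl
          · simp only [hardDist]
            rw [if_neg]
            intro h; apply hne'; rw [h]
        rwa [this] at hC
      set S : Finset (Set (V ⊕ Fin (k - 3))) :=
        𝒞.filter (fun C => ∃ v, Sum.inl v ∈ C) with hS
      set T : Finset (Set (V ⊕ Fin (k - 3))) :=
        Finset.univ.image (fun i : Fin (k - 3) => ({Sum.inr i} : Set (V ⊕ Fin (k - 3)))) with hT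
      have hTcard : T.card = k - 3 := by
        rw [hT, Finset.card_image_of_injective _ (fun i j h => by
          simpa using Set.singleton_eq_singleton_iff.mp h), Finset.card_univ, Fintype.card_fin]
      have hTsub : T ⊆ 𝒞 := by
        intro C hC
        rw [hT, Finset.mem_image] at hC
        obtain ⟨i, _, rfl⟩ := hC
        exact hsing i
      have hST : Disjoint S T := by
        rw [Finset.disjoint_left]
        intro C hCS hCT
        rw [hS, Finset.mem_filter] at hCS
        obtain ⟨v, hv⟩ := hCS.2
        rw [hT, Finset.mem_image] at hCT
        obtain ⟨i, _, rfl⟩ := hCT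
        simp at hv
      have hScard : S.card ≤ 3 := by
        have h1 : S.card + T.card = (S ∪ T).card :=
          (Finset.card_union_of_disjoint hST).symm
        have h2 : (S ∪ T).card ≤ 𝒞.card :=
          Finset.card_le_card (Finset.union_subset (Finset.filter_subset _ _) hTsub)
        omega
      obtain ⟨e⟩ : Nonempty (↥S ↪ Fin 3) := by
        apply Function.Embedding.nonempty_iff_card_le.mpr
        simpa using hScard
      choose f hf1 hf2 using fun v : V => hcover' (Sum.inl v)
      have hfS : ∀ v, f v ∈ S := fun v =>
        Finset.mem_filter.mpr ⟨hf1 v, v, hf2 v⟩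
      refine ⟨fun v => e ⟨f v, hfS v⟩, ?_⟩
      intro u v huv heq
      have hfuv : f u = f v := by
        have := e.injective heq
        exact Subtype.ext_iff.mp this
      apply hkey (f u) (hf1 u) (Sum.inl u) (hf2 u) (Sum.inl v) (hfuv ▸ hf2 v)
      simp only [hardDist]
      rw [if_neg (G.ne_of_adj huv), if_pos huv]
end

section
/- For any finite partition 𝒞 of a finite metric space X and any η > 0, there exists a partition 𝒞' of X, whose clusters are unions of clusters of 𝒞, such that every two distinct clusters C₁, C₂ ∈ 𝒞' satisfy d(C₁,C₂) > 2η, and ∑_{C ∈ 𝒞'} diam(C) ≤ ∑_{C ∈ 𝒞} diam(C) + 2·|𝒞|·η. -/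
private theorem stmt15_aux {X : Type*} [MetricSpace X] [Fintype X]
    (η : ℝ) (hη : 0 < η) :
    ∀ (n : ℕ) (𝒞 : Finset (Set X)), 𝒞.card ≤ n →
    (∀ C ∈ 𝒞, Set.Nonempty C) →
    ((𝒞 : Set (Set X)).PairwiseDisjoint id) →
    (⋃ C ∈ 𝒞, C = Set.univ) →
    ∃ 𝒞' : Finset (Set X),
      (∀ C ∈ 𝒞', Set.Nonempty C) ∧
      (𝒞' : Set (Set X)).PairwiseDisjoint id ∧
      (⋃ C ∈ 𝒞', C = Set.univ) ∧
      (∀ C ∈ 𝒞', ∃ S ⊆ 𝒞, C = ⋃ C' ∈ S, C') ∧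
      (∀ C₁ ∈ 𝒞', ∀ C₂ ∈ 𝒞', C₁ ≠ C₂ → 2 * η < sInf (Set.image2 dist C₁ C₂)) ∧
      ∑ C ∈ 𝒞', Metric.diam C ≤ (∑ C ∈ 𝒞, Metric.diam C) + 2 * 𝒞.card * η := by
  classical
  intro n
  induction n with
  | zero =>
      intro 𝒞 hcard hne hdisj hcov
      have h𝒞 : 𝒞 = ∅ := Finset.card_eq_zero.mp (Nat.le_zero.mp hcard)
      refine ⟨𝒞, hne, hdisj, hcov, ?_, ?_, ?_⟩
      · intro C hC
        exact ⟨{C}, by simpa using hC, by simp⟩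
      · intro C₁ h₁ C₂ h₂ _
        simp [h𝒞] at h₁
      · have : (0:ℝ) ≤ 2 * 𝒞.card * η := by positivity
        linarith
  | succ n ih =>
      intro 𝒞 hcard hne hdisj hcov
      by_cases hgood : ∀ C₁ ∈ 𝒞, ∀ C₂ ∈ 𝒞, C₁ ≠ C₂ → 2 * η < sInf (Set.image2 dist C₁ C₂)
      · refine ⟨𝒞, hne, hdisj, hcov, ?_, hgood, ?_⟩
        · intro C hC
          exact ⟨{C}, by simpa using hC, by simp⟩
        · have : (0:ℝ) ≤ 2 * 𝒞.card * η := by positivity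
          linarith
      · push_neg at hgood
        obtain ⟨C₁, hC₁, C₂, hC₂, hne12, hinf⟩ := hgood
        -- distance between C₁ and C₂ is ≤ 2η; get witnessing points
        have hfin : (Set.image2 dist C₁ C₂).Finite :=
          (Set.toFinite C₁).image2 _ (Set.toFinite C₂)
        have hnonem : (Set.image2 dist C₁ C₂).Nonempty :=
          (hne C₁ hC₁).image2 (hne C₂ hC₂)
        have hmem := hnonem.csInf_mem hfin
        obtain ⟨x, hx, y, hy, hxy⟩ := hmem
        have hdxy : dist x y ≤ 2 * η := by rw [hxy]; exact hinf
        -- the merged family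
        set ee : Finset (Set X) := (𝒞.erase C₁).erase C₂ with hee
        set D : Finset (Set X) := insert (C₁ ∪ C₂) ee with hD
        have hC₂e : C₂ ∈ 𝒞.erase C₁ := Finset.mem_erase.mpr ⟨(Ne.symm hne12), hC₂⟩
        have hmemee : ∀ E ∈ ee, E ∈ 𝒞 ∧ E ≠ C₁ ∧ E ≠ C₂ := by
          intro E hE
          rw [hee, Finset.mem_erase, Finset.mem_erase] at hE
          exact ⟨hE.2.2, hE.2.1, hE.1⟩
        -- hypotheses for D
        have hneD : ∀ C ∈ D, Set.Nonempty C := by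
          intro C hC
          rcases Finset.mem_insert.mp hC with h | h
          · exact h ▸ (hne C₁ hC₁).mono Set.subset_union_left
          · exact hne C (hmemee C h).1
        have hdisjD : (D : Set (Set X)).PairwiseDisjoint id := by
          intro a ha b hb hab
          simp only [hD, Finset.coe_insert, Set.mem_insert_iff, Finset.mem_coe] at ha hb
          have key : ∀ E ∈ ee, Disjoint (C₁ ∪ C₂) E := by
            intro E hE
            obtain ⟨hE𝒞, hE1, hE2⟩ := hmemee E hE
            exact Set.disjoint_union_left.mpr
              ⟨hdisj hC₁ hE𝒞 hE1.symm, hdisj hC₂ hE𝒞 hE2.symm⟩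
          rcases ha with ha | ha <;> rcases hb with hb | hb
          · exact absurd (ha.trans hb.symm) hab
          · exact ha ▸ key b hb
          · exact (hb ▸ (key a ha)).symm
          · exact hdisj (hmemee a ha).1 (hmemee b hb).1 hab
        have hcovD : ⋃ C ∈ D, C = Set.univ := by
          rw [Set.eq_univ_iff_forall]
          intro z
          have hz : z ∈ ⋃ C ∈ 𝒞, C := by rw [hcov]; trivial
          simp only [Set.mem_iUnion, exists_prop] at hz ⊢
          obtain ⟨C, hC, hzC⟩ := hz
          by_cases h1 : C = C₁
          · exact ⟨C₁ ∪ C₂, Finset.mem_insert_self _ _, Or.inl (h1 ▸ hzC)⟩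
          by_cases h2 : C = C₂
          · exact ⟨C₁ ∪ C₂, Finset.mem_insert_self _ _, Or.inr (h2 ▸ hzC)⟩
          · exact ⟨C, Finset.mem_insert_of_mem
              (Finset.mem_erase.mpr ⟨h2, Finset.mem_erase.mpr ⟨h1, hC⟩⟩), hzC⟩
        -- card bound
        have hcardee : ee.card = 𝒞.card - 2 := by
          rw [hee, Finset.card_erase_of_mem hC₂e, Finset.card_erase_of_mem hC₁]
          omega
        have h2card : 2 ≤ 𝒞.card := by
          have := Finset.one_lt_card_iff.mpr ⟨C₁, C₂, hC₁, hC₂, hne12⟩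
          omega
        have hcardD : D.card + 1 ≤ 𝒞.card := by
          rw [hD]
          have := Finset.card_insert_le (C₁ ∪ C₂) ee
          omega
        have hcardDn : D.card ≤ n := by omega
        -- sum bound: ∑ D ≤ ∑ 𝒞 + 2η
        have hdiamU : Metric.diam (C₁ ∪ C₂) ≤ Metric.diam C₁ + Metric.diam C₂ + 2 * η := by
          have := Metric.diam_union hx hy
          linarith
        have hsum𝒞 : ∑ C ∈ ee, Metric.diam C + Metric.diam C₂ + Metric.diam C₁
            = ∑ C ∈ 𝒞, Metric.diam C := by
          rw [hee, Finset.sum_erase_add _ _ hC₂e, Finset.sum_erase_add _ _ hC₁]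
        have hsumD : ∑ C ∈ D, Metric.diam C ≤ ∑ C ∈ 𝒞, Metric.diam C + 2 * η := by
          have hle : ∑ C ∈ D, Metric.diam C
              ≤ Metric.diam (C₁ ∪ C₂) + ∑ C ∈ ee, Metric.diam C := by
            by_cases hmem : (C₁ ∪ C₂) ∈ ee
            · rw [hD, Finset.insert_eq_self.mpr hmem]
              have := Metric.diam_nonneg (s := C₁ ∪ C₂)
              linarith
            · rw [hD, Finset.sum_insert hmem]
          linarith
        -- apply IH
        obtain ⟨𝒞', h1, h2, h3, h4, h5, h6⟩ := ih D hcardDn hneD hdisjD hcovD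
        refine ⟨𝒞', h1, h2, h3, ?_, h5, ?_⟩
        · -- each element of 𝒞' is a union of elements of 𝒞
          have hDunion : ∀ E ∈ D, ∃ S ⊆ 𝒞, E = ⋃ C' ∈ S, C' := by
            intro E hE
            rcases Finset.mem_insert.mp hE with h | h
            · refine ⟨{C₁, C₂}, ?_, ?_⟩
              · intro z hz
                rcases Finset.mem_insert.mp hz with h' | h'
                · exact h' ▸ hC₁
                · exact (Finset.mem_singleton.mp h') ▸ hC₂
              · simp [h]
            · exact ⟨{E}, by simpa using (hmemee E h).1, by simp⟩
          intro C hC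
          obtain ⟨T, hT, hCT⟩ := h4 C hC
          refine ⟨𝒞.filter (fun E => E ⊆ C), Finset.filter_subset _ _, ?_⟩
          apply Set.Subset.antisymm
          · intro z hz
            rw [hCT] at hz
            simp only [Set.mem_iUnion, exists_prop] at hz
            obtain ⟨E, hE, hzE⟩ := hz
            obtain ⟨S, hS, hES⟩ := hDunion E (hT hE)
            rw [hES] at hzE
            simp only [Set.mem_iUnion, exists_prop] at hzE
            obtain ⟨F, hF, hzF⟩ := hzE
            have hFE : F ⊆ E := by
              rw [hES]; intro w hw
              simp only [Set.mem_iUnion, exists_prop]; exact ⟨F, hF, hw⟩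
            have hEC : E ⊆ C := by
              rw [hCT]; intro w hw
              simp only [Set.mem_iUnion, exists_prop]; exact ⟨E, hE, hw⟩
            simp only [Set.mem_iUnion, exists_prop]
            exact ⟨F, Finset.mem_filter.mpr ⟨hS hF, hFE.trans hEC⟩, hzF⟩
          · intro z hz
            simp only [Set.mem_iUnion, exists_prop] at hz
            obtain ⟨F, hF, hzF⟩ := hz
            exact (Finset.mem_filter.mp hF).2 hzF
        · -- sum bound
          have hDcast : (D.card : ℝ) + 1 ≤ (𝒞.card : ℝ) := by
            exact_mod_cast hcardD
          nlinarith [h6, hsumD]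

theorem stmt15 {X : Type*} [MetricSpace X] [Fintype X] (𝒞 : Finset (Set X))
    (η : ℝ) (hη : 0 < η)
    (hne : ∀ C ∈ 𝒞, Set.Nonempty C)
    (hdisj : (𝒞 : Set (Set X)).PairwiseDisjoint id)
    (hcov : ⋃ C ∈ 𝒞, C = Set.univ) :
    ∃ 𝒞' : Finset (Set X),
      (∀ C ∈ 𝒞', Set.Nonempty C) ∧
      (𝒞' : Set (Set X)).PairwiseDisjoint id ∧
      (⋃ C ∈ 𝒞', C = Set.univ) ∧
      (∀ C ∈ 𝒞', ∃ S ⊆ 𝒞, C = ⋃ C' ∈ S, C') ∧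
      (∀ C₁ ∈ 𝒞', ∀ C₂ ∈ 𝒞', C₁ ≠ C₂ → 2 * η < sInf (Set.image2 dist C₁ C₂)) ∧
      ∑ C ∈ 𝒞', Metric.diam C ≤ (∑ C ∈ 𝒞, Metric.diam C) + 2 * 𝒞.card * η := by
  exact stmt15_aux η hη 𝒞.card 𝒞 le_rfl hne hdisj hcov
end
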